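/- Suppose f : [0,1]×[0,∞) → [0,∞) is continuous and satisfies: (C1) there exist real numbers a and c with 0 < a, a·τ₂ < 1, c > 0, and f(t,x) ≤ a·x + c for all (t,x) ∈ [0,1]×[0,∞); (C2) there exist real numbers b and δ with b·τ₁ ≥ 1, δ > 0, and f(t,x) ≥ b·x for all (t,x) ∈ [0,1]×[0,δ]. Then there exists a continuous function u : [0,1] → ℝ with u(t) ≥ 0 for all t ∈ [0,1], u not identically zero, such that u(t) = ∫₀¹ H(t,s)·f(s,u(s)) ds for all t ∈ [0,1] (i.e., the nonlocal fractional boundary value problem D^α u + f(t,u) = 0, u(0) = u''(0) = 0, u(1) = μ₀u(η) + βγ[u] has at least one positive solution). -/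

import Mathlib

/-!
Instead of a cone fixed point theorem, the solution is obtained as a limit of solutions of
regularised problems. The kernel splits as `H(t,s) = t q(s) - K(t,s)` with the Volterra kernel
`K(t,s) = (t-s)₊^(α-1)/Γ(α)`. If `g` is Lipschitz in `x`, then for each `c ∈ ℝ` the Volterra
equation `u = w + c t - ∫ K(·,s) g(s,u(s)) ds` has a unique solution `U_c` (an iterate of the
right-hand side is a contraction, as `(m ‖K‖)^N / N! → 0`) depending continuously on `c`; a fixed
point of the bounded map `c ↦ ∫ q g(s, U_c(s)) ds`, found by the intermediate value theorem, makes
`U_c` a solution of `u = w + ∫ H(·,s) g(s,u(s)) ds`.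

This is applied with `w = ρ/m` and with `g` the `m`-Lipschitz inf-convolution of the truncated `f`.
The bounds `ρ(t) Φ(s) ≤ H(t,s) ≤ Φ(s)` give estimates uniform in `m`: `u ≤ (c τ₂ + 1)/(1 - a τ₂)`
by (C1); `max u > δ/2` by (C2), since otherwise `M = ∫ Φ u` would satisfy `M ≥ (1/m + b M) τ₁ > M`;
and a common Lipschitz constant. By Arzelà–Ascoli a subsequence converges uniformly, and dominated
convergence shows that the limit solves the original equation.
-/

open MeasureTheory Set Filter

noncomputable def G (α t s : ℝ) : ℝ :=
  if s ≤ t then (t * (1 - s) ^ (α - 1) - (t - s) ^ (α - 1)) / Real.Gamma α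
  else t * (1 - s) ^ (α - 1) / Real.Gamma α

noncomputable def Psi (α s : ℝ) : ℝ := (1 - s) ^ (α - 1) / Real.Gamma α

/-- Integral of `f` over `[0,1]` against the finite signed measure `ν`
(via its Jordan decomposition). -/
noncomputable def stInt (ν : MeasureTheory.SignedMeasure ℝ) (f : ℝ → ℝ) : ℝ :=
  ∫ t in Icc (0:ℝ) 1, f t ∂ν.toJordanDecomposition.posPart
    - ∫ t in Icc (0:ℝ) 1, f t ∂ν.toJordanDecomposition.negPart

noncomputable def gA (α : ℝ) (ν : MeasureTheory.SignedMeasure ℝ) (s : ℝ) : ℝ :=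
  stInt ν (fun t => G α t s)

noncomputable def Lam (η μ₀ β : ℝ) (ν : MeasureTheory.SignedMeasure ℝ) : ℝ :=
  μ₀ * η + β * stInt ν (fun t => t)

noncomputable def Hker (α η μ₀ β : ℝ) (ν : MeasureTheory.SignedMeasure ℝ) (t s : ℝ) : ℝ :=
  β * t / (1 - Lam η μ₀ β ν) * gA α ν s
    + μ₀ * t / (1 - Lam η μ₀ β ν) * G α η s + G α t s

noncomputable def Phi (α η μ₀ β : ℝ) (ν : MeasureTheory.SignedMeasure ℝ) (s : ℝ) : ℝ :=
  β / (1 - Lam η μ₀ β ν) * gA α ν s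
    + (μ₀ - Lam η μ₀ β ν + 1) / (1 - Lam η μ₀ β ν) * Psi α s

noncomputable def rho (α η t : ℝ) : ℝ := (η - η ^ (α - 1)) * (t - t ^ (α - 1))

noncomputable def tau1 (α η μ₀ β : ℝ) (ν : MeasureTheory.SignedMeasure ℝ) : ℝ :=
  ∫ s in Icc (0:ℝ) 1, rho α η s * Phi α η μ₀ β ν s

noncomputable def tau2 (α η μ₀ β : ℝ) (ν : MeasureTheory.SignedMeasure ℝ) : ℝ :=
  ∫ s in Icc (0:ℝ) 1, Phi α η μ₀ β ν s

open Topology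
open scoped NNReal BoundedContinuousFunction

lemma lipschitzOnWith_rpow_Icc {p : ℝ} (hp : 1 ≤ p) :
    LipschitzOnWith (Real.toNNReal p) (fun x : ℝ => x ^ p) (Icc 0 1) := by
  refine (convex_Icc 0 1).lipschitzOnWith_of_nnnorm_hasDerivWithin_le
    (fun x _ => (Real.hasDerivAt_rpow_const (Or.inr hp)).hasDerivWithinAt) fun x hx => ?_
  rw [← NNReal.coe_le_coe, coe_nnnorm, Real.norm_eq_abs, Real.coe_toNNReal _ (by linarith),
    abs_of_nonneg (mul_nonneg (by linarith) (Real.rpow_nonneg hx.1 _))]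
  exact mul_le_of_le_one_right (by linarith) (Real.rpow_le_one hx.1 hx.2 (by linarith))

lemma abs_rpow_sub_rpow_le {p x y : ℝ} (hp : 1 ≤ p) (hx : x ∈ Icc (0:ℝ) 1)
    (hy : y ∈ Icc (0:ℝ) 1) : |x ^ p - y ^ p| ≤ p * |x - y| := by
  simpa [Real.dist_eq, Real.coe_toNNReal _ (zero_le_one.trans hp)] using
    (lipschitzOnWith_rpow_Icc hp).dist_le_mul x hx y hy

lemma sub_rpow_mem_Icc {p x : ℝ} (hp : 1 ≤ p) (hx : x ∈ Icc (0:ℝ) 1) :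
    x - x ^ p ∈ Icc 0 x := by
  have hle : x ^ p ≤ x := by
    simpa using Real.rpow_le_rpow_of_exponent_ge' hx.1 hx.2 zero_le_one hp
  exact ⟨sub_nonneg.2 hle, sub_le_self _ (Real.rpow_nonneg hx.1 p)⟩

section Volterra

variable {K g : ℝ → ℝ → ℝ}

lemma continuous_kernel_mul_comp (hK : Continuous (Function.uncurry K))
    (hg : Continuous (Function.uncurry g)) {u : ℝ → ℝ} (hu : Continuous u) :
    Continuous (Function.uncurry fun t s => K t s * g s (u s)) :=
  hK.mul (hg.comp (continuous_snd.prodMk (hu.comp continuous_snd)))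

noncomputable def volterraMap (hK : Continuous (Function.uncurry K))
    (hg : Continuous (Function.uncurry g)) (F u : C(Icc (0:ℝ) 1, ℝ)) : C(Icc (0:ℝ) 1, ℝ) where
  toFun t := F t - ∫ s in Icc 0 1, K t s * g s (IccExtend zero_le_one u s)
  continuous_toFun := F.continuous.sub <|
    (continuous_parametric_integral_of_continuous
      (continuous_kernel_mul_comp hK hg u.continuous.Icc_extend') isCompact_Icc).comp
      continuous_subtype_val

variable {hK : Continuous (Function.uncurry K)} {hg : Continuous (Function.uncurry g)}

lemma volterraMap_apply (F u : C(Icc (0:ℝ) 1, ℝ)) (t : Icc (0:ℝ) 1) :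
    volterraMap hK hg F u t = F t - ∫ s in Icc 0 1, K t s * g s (IccExtend zero_le_one u s) :=
  rfl

variable {κ m : ℝ≥0} (hKv : ∀ t s, t ≤ s → K t s = 0)
  (hKb : ∀ t ∈ Icc (0:ℝ) 1, ∀ s ∈ Icc (0:ℝ) 1, |K t s| ≤ κ) (hgL : ∀ s, LipschitzWith m (g s))
include hKv hKb hgL

lemma abs_volterraMap_sub_le (F u v : C(Icc (0:ℝ) 1, ℝ)) {C : ℝ} {n : ℕ}
    (huv : ∀ s : Icc (0:ℝ) 1, |u s - v s| ≤ C * (s : ℝ) ^ n) (t : Icc (0:ℝ) 1) :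
    |volterraMap hK hg F u t - volterraMap hK hg F v t|
      ≤ m * κ * C * (t : ℝ) ^ (n + 1) / (n + 1) := by
  have hint : ∀ w : C(Icc (0:ℝ) 1, ℝ),
      IntegrableOn (fun s => K t s * g s (IccExtend zero_le_one w s)) (Icc 0 1) := fun w =>
    ((continuous_kernel_mul_comp hK hg w.continuous.Icc_extend').comp
      (Continuous.prodMk_right (t : ℝ))).integrableOn_Icc
  have hbound : ∀ s ∈ Icc (0:ℝ) 1,
      ‖K t s * g s (IccExtend zero_le_one v s) - K t s * g s (IccExtend zero_le_one u s)‖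
        ≤ m * κ * C * (Icc 0 (t : ℝ)).indicator (· ^ n) s := by
    intro s hs
    rcases le_or_gt s t with hst | hts
    · have hg' : |g s (u ⟨s, hs⟩) - g s (v ⟨s, hs⟩)| ≤ m * |u ⟨s, hs⟩ - v ⟨s, hs⟩| := by
        simpa [Real.dist_eq] using (hgL s).dist_le_mul (u ⟨s, hs⟩) (v ⟨s, hs⟩)
      rw [IccExtend_of_mem _ _ hs, IccExtend_of_mem _ _ hs,
        indicator_of_mem (show s ∈ Icc 0 (t : ℝ) from ⟨hs.1, hst⟩), ← mul_sub, norm_mul,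
        Real.norm_eq_abs, Real.norm_eq_abs, abs_sub_comm]
      calc _ ≤ κ * (m * (C * s ^ n)) :=
            mul_le_mul (hKb t t.2 s hs) (hg'.trans (by gcongr; exact huv ⟨s, hs⟩))
              (abs_nonneg _) ((abs_nonneg _).trans (hKb t t.2 s hs))
        _ = _ := by ring
    · rw [hKv t s hts.le, indicator_of_notMem (fun h => hts.not_ge h.2)]
      simp
  rw [volterraMap_apply, volterraMap_apply, sub_sub_sub_cancel_left,
    ← integral_sub (hint v) (hint u), ← Real.norm_eq_abs]
  refine (norm_integral_le_of_norm_le ?_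
    (ae_restrict_of_forall_mem measurableSet_Icc hbound)).trans (le_of_eq ?_)
  · exact ((continuous_pow n).integrableOn_Icc.integrable.indicator measurableSet_Icc).const_mul _
  · rw [integral_const_mul, setIntegral_indicator measurableSet_Icc,
      inter_eq_self_of_subset_right (Icc_subset_Icc le_rfl t.2.2), integral_Icc_eq_integral_Ioc,
      ← intervalIntegral.integral_of_le t.2.1, integral_pow]
    ring

lemma abs_iterate_volterraMap_sub_le (F u v : C(Icc (0:ℝ) 1, ℝ)) (n : ℕ) (t : Icc (0:ℝ) 1) :
    |(volterraMap hK hg F)^[n] u t - (volterraMap hK hg F)^[n] v t|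
      ≤ (m * κ) ^ n / n.factorial * dist u v * (t : ℝ) ^ n := by
  induction n generalizing t with
  | zero => simpa [← Real.dist_eq] using ContinuousMap.dist_apply_le_dist t
  | succ n ih =>
    rw [Function.iterate_succ_apply', Function.iterate_succ_apply']
    refine (abs_volterraMap_sub_le hKv hKb hgL F _ _ ih t).trans (le_of_eq ?_)
    rw [Nat.factorial_succ]
    push_cast
    field_simp
    ring

lemma dist_iterate_volterraMap_le (F u v : C(Icc (0:ℝ) 1, ℝ)) (n : ℕ) :
    dist ((volterraMap hK hg F)^[n] u) ((volterraMap hK hg F)^[n] v)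
      ≤ (m * κ) ^ n / n.factorial * dist u v := by
  refine (ContinuousMap.dist_le (by positivity)).2 fun t => ?_
  rw [Real.dist_eq]
  refine (abs_iterate_volterraMap_sub_le hKv hKb hgL F u v n t).trans ?_
  exact mul_le_of_le_one_right (by positivity) (pow_le_one₀ t.2.1 t.2.2)

lemma dist_volterraMap_le (F F' u v : C(Icc (0:ℝ) 1, ℝ)) :
    dist (volterraMap hK hg F u) (volterraMap hK hg F' v) ≤ dist F F' + m * κ * dist u v := by
  have h1 := dist_iterate_volterraMap_le (hK := hK) (hg := hg) hKv hKb hgL F u v 1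
  have h2 : dist (volterraMap hK hg F v) (volterraMap hK hg F' v) ≤ dist F F' := by
    refine (ContinuousMap.dist_le dist_nonneg).2 fun t => ?_
    simpa [volterraMap_apply] using ContinuousMap.dist_apply_le_dist t
  simp only [Function.iterate_one, pow_one, Nat.factorial_one, Nat.cast_one, div_one] at h1
  linarith [dist_triangle (volterraMap hK hg F u) (volterraMap hK hg F v)
    (volterraMap hK hg F' v)]

lemma dist_iterate_volterraMap_le_of_forcing (F F' z : C(Icc (0:ℝ) 1, ℝ)) (n : ℕ) :
    dist ((volterraMap hK hg F)^[n] z) ((volterraMap hK hg F')^[n] z)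
      ≤ (1 + m * κ) ^ n * dist F F' := by
  induction n with
  | zero => simp
  | succ n ih =>
    rw [Function.iterate_succ_apply', Function.iterate_succ_apply', pow_succ]
    refine (dist_volterraMap_le hKv hKb hgL F F' _ _).trans ?_
    have h1 : (1:ℝ) ≤ (1 + m * κ) ^ n := one_le_pow₀ (le_add_of_nonneg_right (by positivity))
    have h2 := mul_le_mul_of_nonneg_left ih (mul_nonneg m.coe_nonneg κ.coe_nonneg)
    have h3 := mul_le_mul_of_nonneg_right h1 (dist_nonneg (x := F) (y := F'))
    linear_combination h2 + h3

theorem exists_continuous_volterraMap_fixedPoint :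
    ∃ S : C(Icc (0:ℝ) 1, ℝ) → C(Icc (0:ℝ) 1, ℝ),
      Continuous S ∧ ∀ F, volterraMap hK hg F (S F) = S F := by
  obtain ⟨N, hN⟩ := ((FloorSemiring.tendsto_pow_div_factorial_atTop ((m : ℝ) * κ)).eventually
    (gt_mem_nhds zero_lt_one)).exists
  set k : ℝ≥0 := ⟨(m * κ) ^ N / N.factorial, by positivity⟩
  have hc : ∀ F, ContractingWith k (volterraMap hK hg F)^[N] := fun F =>
    ⟨hN, LipschitzWith.of_dist_le_mul (dist_iterate_volterraMap_le hKv hKb hgL F · · N)⟩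
  refine ⟨fun F => (hc F).fixedPoint _, ?_, fun F => (hc F).isFixedPt_fixedPoint_iterate⟩
  refine (LipschitzWith.of_dist_le' (K := (1 + m * κ) ^ N / (1 - k)) fun F F' => ?_).continuous
  rw [div_mul_eq_mul_div]
  exact (hc F).fixedPoint_lipschitz_in_map (hc F')
    (dist_iterate_volterraMap_le_of_forcing hKv hKb hgL F F' · N)

end Volterra

theorem exists_continuous_volterra_solution_family {K g : ℝ → ℝ → ℝ} {κ m : ℝ≥0}
    (hK : Continuous (Function.uncurry K)) (hKv : ∀ t s, t ≤ s → K t s = 0)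
    (hKb : ∀ t ∈ Icc (0:ℝ) 1, ∀ s ∈ Icc (0:ℝ) 1, |K t s| ≤ κ)
    (hg : Continuous (Function.uncurry g)) (hgL : ∀ s, LipschitzWith m (g s)) {w : ℝ → ℝ}
    (hw : Continuous w) :
    ∃ U : ℝ → ℝ → ℝ, Continuous (Function.uncurry U) ∧ ∀ c, ∀ t ∈ Icc (0:ℝ) 1,
      U c t = c * t + w t - ∫ s in Icc 0 1, K t s * g s (U c s) := by
  obtain ⟨S, hS, hSfix⟩ :=
    exists_continuous_volterraMap_fixedPoint (hK := hK) (hg := hg) hKv hKb hgL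
  let F : ℝ → C(Icc (0:ℝ) 1, ℝ) := fun c => ⟨fun t => c * t + w t, by fun_prop⟩
  have hF : Continuous F := ContinuousMap.continuous_of_continuous_uncurry _ <|
    (continuous_fst.mul (continuous_subtype_val.comp continuous_snd)).add
      (hw.comp (continuous_subtype_val.comp continuous_snd))
  refine ⟨fun c => IccExtend zero_le_one (S (F c)),
    Continuous.IccExtend (f := fun p : ℝ × ℝ => S (F p.1)) (continuous_eval.comp
      (((hS.comp hF).comp (continuous_fst.comp continuous_fst)).prodMk continuous_snd))
      continuous_snd, fun c t ht => ?_⟩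
  dsimp only
  rw [IccExtend_of_mem _ _ ht]
  conv_lhs => rw [← hSfix (F c)]
  rfl

theorem exists_solution_rankOne_sub_volterra {K g : ℝ → ℝ → ℝ} {κ m : ℝ≥0}
    (hK : Continuous (Function.uncurry K)) (hKv : ∀ t s, t ≤ s → K t s = 0)
    (hKb : ∀ t ∈ Icc (0:ℝ) 1, ∀ s ∈ Icc (0:ℝ) 1, |K t s| ≤ κ)
    (hg : Continuous (Function.uncurry g)) (hgL : ∀ s, LipschitzWith m (g s)) {M : ℝ}
    (hgM : ∀ s x, |g s x| ≤ M) {q w : ℝ → ℝ} (hq : Continuous q) (hw : Continuous w) :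
    ∃ u : ℝ → ℝ, Continuous u ∧ ∀ t ∈ Icc (0:ℝ) 1,
      u t = w t + ∫ s in Icc 0 1, (t * q s - K t s) * g s (u s) := by
  obtain ⟨U, hU, hUeq⟩ := exists_continuous_volterra_solution_family hK hKv hKb hg hgL hw
  have hint : ∀ c φ, Continuous φ → IntegrableOn (fun s => φ s * g s (U c s)) (Icc 0 1) :=
    fun c φ hφ => (hφ.mul (hg.comp (continuous_id.prodMk
      (hU.comp (Continuous.prodMk_right c))))).integrableOn_Icc
  let ψ : ℝ → ℝ := fun c => ∫ s in Icc 0 1, q s * g s (U c s)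
  have hψ : Continuous ψ := continuous_parametric_integral_of_continuous
    ((hq.comp continuous_snd).mul (hg.comp (continuous_snd.prodMk hU))) isCompact_Icc
  set B := ∫ s in Icc (0:ℝ) 1, |q s| * M
  have hψB : ∀ c, ψ c ∈ Icc (-B) B := by
    intro c
    rw [mem_Icc, ← abs_le, ← Real.norm_eq_abs]
    refine norm_integral_le_of_norm_le
      ((hq.abs.mul continuous_const : Continuous fun s => |q s| * M).integrableOn_Icc
        (μ := volume) (a := 0) (b := 1)) (ae_of_all _ fun s => ?_)
    rw [norm_mul, Real.norm_eq_abs, Real.norm_eq_abs]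
    exact mul_le_mul_of_nonneg_left (hgM _ _) (abs_nonneg _)
  obtain ⟨c, -, hc⟩ := exists_mem_Icc_isFixedPt_of_mapsTo hψ.continuousOn
    (neg_le_self ((abs_nonneg _).trans (abs_le.2 (hψB 0)))) fun c _ => hψB c
  refine ⟨U c, hU.comp (Continuous.prodMk_right c), fun t ht => ?_⟩
  have hsplit : ∫ s in Icc 0 1, (t * q s - K t s) * g s (U c s)
      = t * ψ c - ∫ s in Icc 0 1, K t s * g s (U c s) := by
    simp_rw [sub_mul, mul_assoc]
    rw [integral_sub ((hint c q hq).const_mul t)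
      (hint c (K t) (hK.comp (Continuous.prodMk_right t))), integral_const_mul]
  rw [hsplit, hc, hUeq c t ht]
  ring

theorem exists_subseq_tendstoUniformlyOn {α : Type*} [PseudoMetricSpace α] {s : Set α}
    (hs : IsCompact s) {u : ℕ → α → ℝ} {L : ℝ≥0} {M : ℝ}
    (hL : ∀ n, LipschitzOnWith L (u n) s) (hM : ∀ n, ∀ x ∈ s, |u n x| ≤ M) :
    ∃ v : α → ℝ, ∃ φ : ℕ → ℕ, StrictMono φ ∧ TendstoUniformlyOn (fun k => u (φ k)) v atTop s := by
  have := isCompact_iff_compactSpace.1 hs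
  let f : ℕ → s →ᵇ ℝ := fun n =>
    .mkOfCompact ⟨s.domRestrict (u n), (hL n).continuousOn.domRestrict⟩
  have hA := BoundedContinuousFunction.arzela_ascoli (Icc (-M) M) isCompact_Icc (range f)
    (by rintro _ x ⟨n, rfl⟩; exact abs_le.1 (hM n x x.2))
    (LipschitzWith.uniformEquicontinuous _ L (by rintro ⟨_, n, rfl⟩; exact (hL n).to_restrict)
      |>.equicontinuous)
  obtain ⟨w, -, φ, hφ, hlim⟩ := hA.tendsto_subseq fun n => subset_closure (mem_range_self n)
  refine ⟨Function.extend (↑) w 0, φ, hφ, ?_⟩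
  rw [tendstoUniformlyOn_iff_tendstoUniformly_comp_coe, Function.extend_comp Subtype.val_injective]
  exact BoundedContinuousFunction.tendsto_iff_tendstoUniformly.1 hlim

theorem exists_ne_zero_of_tendstoUniformlyOn {α : Type*} {s : Set α} {u : ℕ → α → ℝ}
    {v : α → ℝ} (hv : TendstoUniformlyOn u v atTop s) {c : ℝ} (hc : 0 < c)
    (hu : ∀ k, ∃ t ∈ s, c < u k t) : ∃ t ∈ s, v t ≠ 0 := by
  obtain ⟨k, hk⟩ := (Metric.tendstoUniformlyOn_iff.1 hv c hc).exists
  obtain ⟨t, ht, hct⟩ := hu k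
  refine ⟨t, ht, fun hvt => ?_⟩
  have := hk t ht
  rw [hvt, Real.dist_eq, zero_sub, abs_neg] at this
  exact (hct.trans_le (le_abs_self _)).not_gt this

section LipschitzApproximation

variable {f : ℝ → ℝ → ℝ} {X : ℝ}

noncomputable def truncation (f : ℝ → ℝ → ℝ) (hX : 0 ≤ X) (t x : ℝ) : ℝ :=
  f (projIcc 0 1 zero_le_one t) (projIcc 0 X hX x)

/-- Projecting `x` onto `[0, X]` keeps this inf-convolution bounded in `x`. -/
noncomputable def lipApprox (f : ℝ → ℝ → ℝ) (hX : 0 ≤ X) (m : ℝ≥0) (t x : ℝ) : ℝ :=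
  sInf ((fun y => truncation f hX t y + m * |(projIcc 0 X hX x : ℝ) - y|) '' Icc 0 X)

variable (hX : 0 ≤ X)

lemma continuous_truncation (hf : ContinuousOn (fun p : ℝ × ℝ => f p.1 p.2) (Icc 0 1 ×ˢ Ici 0)) :
    Continuous (Function.uncurry (truncation f hX)) :=
  hf.comp_continuous (f := fun p : ℝ × ℝ =>
      ((projIcc 0 1 zero_le_one p.1 : ℝ), (projIcc 0 X hX p.2 : ℝ)))
    (((continuous_subtype_val.comp (continuous_projIcc (h := zero_le_one))).comp
      continuous_fst).prodMk ((continuous_subtype_val.comp continuous_projIcc).comp continuous_snd))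
    fun p => ⟨(projIcc 0 1 zero_le_one p.1).2, (projIcc 0 X hX p.2).2.1⟩

lemma truncation_of_mem {t x : ℝ} (ht : t ∈ Icc (0:ℝ) 1) (hx : x ∈ Icc 0 X) :
    truncation f hX t x = f t x := by
  rw [truncation, projIcc_of_mem _ ht, projIcc_of_mem _ hx]

lemma truncation_le {a c : ℝ}
    (hC1 : ∀ t ∈ Icc (0:ℝ) 1, ∀ x : ℝ, 0 ≤ x → f t x ≤ a * x + c) (t x : ℝ) :
    truncation f hX t x ≤ a * projIcc 0 X hX x + c :=
  hC1 _ (projIcc 0 1 zero_le_one t).2 _ (projIcc 0 X hX x).2.1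

variable {m : ℝ≥0} {t x : ℝ}

lemma le_lipApprox {b : ℝ}
    (h : ∀ y ∈ Icc 0 X, b ≤ truncation f hX t y + m * |(projIcc 0 X hX x : ℝ) - y|) :
    b ≤ lipApprox f hX m t x :=
  le_csInf ((nonempty_Icc.2 hX).image _) (forall_mem_image.2 h)

lemma continuous_lipApprox (hf : ContinuousOn (fun p : ℝ × ℝ => f p.1 p.2) (Icc 0 1 ×ˢ Ici 0)) :
    Continuous (Function.uncurry (lipApprox f hX m)) :=
  isCompact_Icc.continuous_sInf (f := fun (p : ℝ × ℝ) y =>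
      truncation f hX p.1 y + m * |(projIcc 0 X hX p.2 : ℝ) - y|) <|
    ((continuous_truncation hX hf).comp ((continuous_fst.comp continuous_fst).prodMk
      continuous_snd)).add (continuous_const.mul ((continuous_subtype_val.comp
        (continuous_projIcc.comp (continuous_snd.comp continuous_fst))).sub continuous_snd).abs)

variable (hf₀ : ∀ t ∈ Icc (0:ℝ) 1, ∀ x : ℝ, 0 ≤ x → 0 ≤ f t x)
include hf₀

lemma truncation_nonneg (t x : ℝ) :
    0 ≤ truncation f hX t x :=
  hf₀ _ (projIcc 0 1 zero_le_one t).2 _ (projIcc 0 X hX x).2.1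

lemma lipApprox_le_add {y : ℝ}
    (hy : y ∈ Icc 0 X) :
    lipApprox f hX m t x ≤ truncation f hX t y + m * |(projIcc 0 X hX x : ℝ) - y| := by
  refine csInf_le ⟨0, ?_⟩ (mem_image_of_mem _ hy)
  rintro _ ⟨z, -, rfl⟩
  exact add_nonneg (truncation_nonneg hX hf₀ t z) (by positivity)

lemma lipApprox_nonneg :
    0 ≤ lipApprox f hX m t x :=
  le_lipApprox hX fun y _ => add_nonneg (truncation_nonneg hX hf₀ t y) (by positivity)

lemma lipApprox_le_truncation :
    lipApprox f hX m t x ≤ truncation f hX t x := by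
  simpa [truncation, projIcc_val] using
    lipApprox_le_add hX hf₀ (projIcc 0 X hX x).2 (m := m) (t := t) (x := x)

lemma abs_lipApprox_le {a c : ℝ}
    (ha : 0 ≤ a) (hC1 : ∀ t ∈ Icc (0:ℝ) 1, ∀ x : ℝ, 0 ≤ x → f t x ≤ a * x + c) :
    |lipApprox f hX m t x| ≤ a * X + c := by
  rw [abs_of_nonneg (lipApprox_nonneg hX hf₀)]
  refine (lipApprox_le_truncation hX hf₀).trans ((truncation_le hX hC1 t x).trans ?_)
  gcongr
  exact (projIcc 0 X hX x).2.2

lemma lipschitzWith_lipApprox (t : ℝ) :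
    LipschitzWith m (lipApprox f hX m t) := by
  refine LipschitzWith.of_le_add_mul m fun x x' => ?_
  rw [← sub_le_iff_le_add]
  refine le_lipApprox hX fun y hy => ?_
  have hp : |(projIcc 0 X hX x : ℝ) - projIcc 0 X hX x'| ≤ dist x x' := by
    simpa [Subtype.dist_eq, Real.dist_eq] using (LipschitzWith.projIcc hX).dist_le_mul x x'
  have h₁ := lipApprox_le_add hX hf₀ hy (m := m) (t := t) (x := x)
  have h₂ : |(projIcc 0 X hX x : ℝ) - y| ≤ dist x x' + |(projIcc 0 X hX x' : ℝ) - y| :=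
    (abs_sub_le _ (projIcc 0 X hX x' : ℝ) _).trans (by linarith)
  have h₃ := mul_le_mul_of_nonneg_left h₂ m.coe_nonneg
  linarith

lemma mul_le_lipApprox {b δ : ℝ}
    (hC2 : ∀ t ∈ Icc (0:ℝ) 1, ∀ x : ℝ, 0 ≤ x → x ≤ δ → b * x ≤ f t x) (hδX : δ ≤ X)
    (hb : 0 ≤ b) (hbm : b ≤ m) (ht : t ∈ Icc (0:ℝ) 1) (hx : x ∈ Icc 0 (δ / 2)) :
    b * x ≤ lipApprox f hX m t x := by
  have hxX : x ∈ Icc 0 X := ⟨hx.1, by linarith [hx.2, hx.1]⟩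
  refine le_lipApprox hX fun y hy => ?_
  rw [projIcc_of_mem _ hxX]
  have hF := truncation_nonneg hX hf₀ t y
  rcases le_or_gt y δ with hyδ | hδy
  · rw [truncation_of_mem hX ht hy]
    have := hC2 t ht y hy.1 hyδ
    have : b * (x - y) ≤ m * |x - y| := (mul_le_mul_of_nonneg_left (le_abs_self _) hb).trans
      (mul_le_mul_of_nonneg_right hbm (abs_nonneg _))
    linarith
  · have : b * x ≤ m * |x - y| := by
      rw [abs_sub_comm, abs_of_pos (by linarith [hx.1, hx.2])]
      exact mul_le_mul hbm (by linarith [hx.1, hx.2]) hx.1 m.coe_nonneg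
    linarith

lemma tendsto_lipApprox (hf : ContinuousOn (fun p : ℝ × ℝ => f p.1 p.2) (Icc 0 1 ×ˢ Ici 0))
    {m : ℕ → ℝ≥0} (hm : Tendsto m atTop atTop) {x : ℕ → ℝ} {x₀ : ℝ}
    (hx : Tendsto x atTop (𝓝 x₀)) (t : ℝ) :
    Tendsto (fun k => lipApprox f hX (m k) t (x k)) atTop (𝓝 (truncation f hX t x₀)) := by
  set F := truncation f hX t
  have hF : Continuous F := (continuous_truncation hX hf).comp (Continuous.prodMk_right t)
  have hFp : ∀ y, F (projIcc 0 X hX y) = F y := fun y => by simp [F, truncation, projIcc_val]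
  have hp : Tendsto (fun k => (projIcc 0 X hX (x k) : ℝ)) atTop (𝓝 (projIcc 0 X hX x₀)) :=
    ((continuous_subtype_val.comp continuous_projIcc).tendsto x₀).comp hx
  refine tendsto_order.2 ⟨fun a ha => ?_, fun a ha => ?_⟩
  · obtain ⟨a', ha', ha'F⟩ := exists_between ha
    obtain ⟨r, hr, hball⟩ :=
      Metric.continuous_iff.1 hF (projIcc 0 X hX x₀) (F x₀ - a') (by linarith)
    filter_upwards [hp.eventually (Metric.ball_mem_nhds _ (half_pos hr)),
      (NNReal.tendsto_coe_atTop.2 hm).eventually_gt_atTop (2 * a' / r)] with k hk hmk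
    refine ha'.trans_le (le_lipApprox hX fun y hy => ?_)
    have hFy := truncation_nonneg hX hf₀ t y
    have hmy := mul_nonneg (m k).coe_nonneg (abs_nonneg ((projIcc 0 X hX (x k) : ℝ) - y))
    rcases lt_or_ge (dist y (projIcc 0 X hX x₀)) r with hyr | hyr
    · have := hball y hyr
      rw [hFp, Real.dist_eq, abs_lt] at this
      linarith
    · rw [div_lt_iff₀ hr] at hmk
      rw [Real.dist_eq] at hk hyr
      have : r / 2 ≤ |(projIcc 0 X hX (x k) : ℝ) - y| := by
        have := abs_sub_le y (projIcc 0 X hX (x k) : ℝ) (projIcc 0 X hX x₀)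
        rw [abs_sub_comm y (projIcc 0 X hX (x k) : ℝ)] at this
        linarith
      nlinarith [(m k).coe_nonneg]
  · filter_upwards [((hF.tendsto x₀).comp hx).eventually (gt_mem_nhds ha)] with k hk
    exact (lipApprox_le_truncation hX hf₀).trans_lt hk

end LipschitzApproximation

section Kernel

variable {α : ℝ}

noncomputable def riemannLiouvilleKernel (α t s : ℝ) : ℝ := max (t - s) 0 ^ (α - 1) / Real.Gamma α

lemma continuous_riemannLiouvilleKernel (hα : 1 < α) :
    Continuous (Function.uncurry (riemannLiouvilleKernel α)) := by
  unfold riemannLiouvilleKernel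
  fun_prop (disch := linarith)

lemma riemannLiouvilleKernel_nonneg (hα : 0 < α) (t s : ℝ) : 0 ≤ riemannLiouvilleKernel α t s :=
  div_nonneg (Real.rpow_nonneg (le_max_right _ _) _) (Real.Gamma_pos_of_pos hα).le

lemma riemannLiouvilleKernel_of_le (hα : 1 < α) {t s : ℝ} (h : t ≤ s) :
    riemannLiouvilleKernel α t s = 0 := by
  rw [riemannLiouvilleKernel, max_eq_right (sub_nonpos.2 h), Real.zero_rpow (by linarith),
    zero_div]

lemma riemannLiouvilleKernel_le (hα : 1 < α) {t s : ℝ} (ht : t ≤ 1) (hs : 0 ≤ s) :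
    riemannLiouvilleKernel α t s ≤ 1 / Real.Gamma α :=
  div_le_div_of_nonneg_right
    (Real.rpow_le_one (le_max_right _ _) (max_le (by linarith) zero_le_one) (by linarith))
    (Real.Gamma_pos_of_pos (by linarith)).le

lemma abs_riemannLiouvilleKernel_sub_le (hα : 2 ≤ α) {t t' s : ℝ} (ht : t ∈ Icc (0:ℝ) 1)
    (ht' : t' ∈ Icc (0:ℝ) 1) (hs : 0 ≤ s) :
    |riemannLiouvilleKernel α t s - riemannLiouvilleKernel α t' s|
      ≤ (α - 1) / Real.Gamma α * |t - t'| := by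
  have hΓ := Real.Gamma_pos_of_pos (by linarith : 0 < α)
  have hmem : ∀ τ ∈ Icc (0:ℝ) 1, max (τ - s) 0 ∈ Icc (0:ℝ) 1 :=
    fun τ hτ => ⟨le_max_right _ _, max_le (by linarith [hτ.2]) zero_le_one⟩
  have hmax : |max (t - s) 0 - max (t' - s) 0| ≤ |t - t'| := by
    simpa using abs_max_sub_max_le_abs (t - s) (t' - s) 0
  rw [riemannLiouvilleKernel, riemannLiouvilleKernel, ← sub_div, abs_div, abs_of_pos hΓ,
    div_mul_eq_mul_div]
  gcongr
  calc _ ≤ (α - 1) * |max (t - s) 0 - max (t' - s) 0| :=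
        abs_rpow_sub_rpow_le (by linarith) (hmem t ht) (hmem t' ht')
    _ ≤ (α - 1) * |t - t'| := by gcongr; linarith

lemma G_eq_mul_Psi_sub (hα : 1 < α) (t s : ℝ) :
    G α t s = t * Psi α s - riemannLiouvilleKernel α t s := by
  unfold G Psi riemannLiouvilleKernel
  split_ifs with h
  · rw [max_eq_left (by linarith)]; ring
  · rw [max_eq_right (by linarith), Real.zero_rpow (by linarith)]; ring

lemma continuous_Psi (hα : 1 < α) : Continuous (Psi α) := by
  unfold Psi
  fun_prop (disch := linarith)

lemma continuous_G (hα : 1 < α) : Continuous (Function.uncurry (G α)) := by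
  have : Function.uncurry (G α) = fun p => p.1 * Psi α p.2 - riemannLiouvilleKernel α p.1 p.2 :=
    funext fun p => G_eq_mul_Psi_sub hα p.1 p.2
  rw [this]
  exact (continuous_fst.mul ((continuous_Psi hα).comp continuous_snd)).sub
    (continuous_riemannLiouvilleKernel hα)

lemma Psi_nonneg (hα : 0 < α) {s : ℝ} (hs : s ≤ 1) : 0 ≤ Psi α s :=
  div_nonneg (Real.rpow_nonneg (by linarith) _) (Real.Gamma_pos_of_pos hα).le

lemma G_le_Psi (hα : 1 < α) {t s : ℝ} (ht : t ∈ Icc (0:ℝ) 1) (hs : s ≤ 1) :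
    G α t s ≤ Psi α s := by
  rw [G_eq_mul_Psi_sub hα]
  nlinarith [riemannLiouvilleKernel_nonneg (by linarith : 0 < α) t s,
    Psi_nonneg (by linarith : 0 < α) hs, ht.2]

lemma sub_rpow_mul_Psi_le_G (hα : 1 < α) {t s : ℝ} (ht : t ∈ Icc (0:ℝ) 1)
    (hs : s ∈ Icc (0:ℝ) 1) : (t - t ^ (α - 1)) * Psi α s ≤ G α t s := by
  have hK : riemannLiouvilleKernel α t s ≤ t ^ (α - 1) * Psi α s := by
    rw [riemannLiouvilleKernel, Psi, ← mul_div_assoc, ← Real.mul_rpow ht.1 (by linarith [hs.2])]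
    refine div_le_div_of_nonneg_right (Real.rpow_le_rpow (le_max_right _ _) ?_ (by linarith))
      (Real.Gamma_pos_of_pos (by linarith)).le
    exact max_le (by nlinarith [hs.1, ht.2]) (mul_nonneg ht.1 (by linarith [hs.2]))
  rw [G_eq_mul_Psi_sub hα]
  linarith

lemma G_nonneg (hα : 2 ≤ α) {t s : ℝ} (ht : t ∈ Icc (0:ℝ) 1) (hs : s ∈ Icc (0:ℝ) 1) :
    0 ≤ G α t s :=
  (mul_nonneg (sub_rpow_mem_Icc (p := α - 1) (by linarith) ht).1
    (Psi_nonneg (by linarith) hs.2)).trans (sub_rpow_mul_Psi_le_G (by linarith) ht hs)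

lemma continuous_gA (hα : 1 < α) (ν : SignedMeasure ℝ) : Continuous (gA α ν) := by
  have hG : Continuous (Function.uncurry fun s t => G α t s) :=
    (continuous_G hα).comp continuous_swap
  exact (continuous_parametric_integral_of_continuous hG isCompact_Icc).sub
    (continuous_parametric_integral_of_continuous hG isCompact_Icc)

end Kernel

section Problem

variable {α η μ₀ β : ℝ} {ν : SignedMeasure ℝ}

structure Admissible (α η μ₀ β : ℝ) (ν : SignedMeasure ℝ) : Prop where
  two_le : 2 ≤ α
  η_mem : η ∈ Icc (0:ℝ) 1
  μ₀_nonneg : 0 ≤ μ₀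
  β_nonneg : 0 ≤ β
  Lam_lt_one : Lam η μ₀ β ν < 1
  gA_nonneg : ∀ s ∈ Icc (0:ℝ) 1, 0 ≤ gA α ν s

noncomputable def Hcoef (α η μ₀ β : ℝ) (ν : SignedMeasure ℝ) (s : ℝ) : ℝ :=
  β / (1 - Lam η μ₀ β ν) * gA α ν s + μ₀ / (1 - Lam η μ₀ β ν) * G α η s + Psi α s

lemma Hker_eq_mul_Hcoef_sub (hα : 1 < α) (t s : ℝ) :
    Hker α η μ₀ β ν t s = t * Hcoef α η μ₀ β ν s - riemannLiouvilleKernel α t s := by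
  rw [Hker, Hcoef, G_eq_mul_Psi_sub hα t s]
  ring

lemma continuous_Hcoef (hα : 1 < α) : Continuous (Hcoef α η μ₀ β ν) := by
  unfold Hcoef
  have : Continuous (G α η) := (continuous_G hα).comp (Continuous.prodMk_right η)
  have := continuous_gA hα ν
  have := continuous_Psi hα
  fun_prop

lemma continuous_Hker (hα : 1 < α) : Continuous (Function.uncurry (Hker α η μ₀ β ν)) := by
  have : Function.uncurry (Hker α η μ₀ β ν) =
      fun p => p.1 * Hcoef α η μ₀ β ν p.2 - riemannLiouvilleKernel α p.1 p.2 :=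
    funext fun p => Hker_eq_mul_Hcoef_sub hα p.1 p.2
  rw [this]
  exact (continuous_fst.mul ((continuous_Hcoef hα).comp continuous_snd)).sub
    (continuous_riemannLiouvilleKernel hα)

lemma continuous_Phi (hα : 1 < α) : Continuous (Phi α η μ₀ β ν) := by
  unfold Phi
  have := continuous_gA hα ν
  have := continuous_Psi hα
  fun_prop

lemma continuous_rho (hα : 1 < α) : Continuous (rho α η) := by
  unfold rho
  fun_prop (disch := linarith)

lemma rho_nonneg (hα : 2 ≤ α) (hη : η ∈ Icc (0:ℝ) 1) {t : ℝ} (ht : t ∈ Icc (0:ℝ) 1) :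
    0 ≤ rho α η t :=
  mul_nonneg (sub_rpow_mem_Icc (p := α - 1) (by linarith) hη).1
    (sub_rpow_mem_Icc (p := α - 1) (by linarith) ht).1

lemma rho_le (hα : 2 ≤ α) (hη : η ∈ Icc (0:ℝ) 1) {t : ℝ} (ht : t ∈ Icc (0:ℝ) 1) :
    rho α η t ≤ t - t ^ (α - 1) := by
  have h1 := sub_rpow_mem_Icc (p := α - 1) (by linarith) hη
  have h2 := sub_rpow_mem_Icc (p := α - 1) (by linarith) ht
  exact mul_le_of_le_one_left h2.1 (h1.2.trans hη.2)

lemma rho_le_one (hα : 2 ≤ α) (hη : η ∈ Icc (0:ℝ) 1) {t : ℝ} (ht : t ∈ Icc (0:ℝ) 1) :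
    rho α η t ≤ 1 :=
  (rho_le hα hη ht).trans ((sub_rpow_mem_Icc (p := α - 1) (by linarith) ht).2.trans ht.2)

lemma abs_rho_sub_le (hα : 2 ≤ α) (hη : η ∈ Icc (0:ℝ) 1) {t t' : ℝ} (ht : t ∈ Icc (0:ℝ) 1)
    (ht' : t' ∈ Icc (0:ℝ) 1) : |rho α η t - rho α η t'| ≤ α * |t - t'| := by
  have hc := sub_rpow_mem_Icc (p := α - 1) (by linarith) hη
  have hp := abs_rpow_sub_rpow_le (p := α - 1) (by linarith) ht ht'
  have : rho α η t - rho α η t' =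
      (η - η ^ (α - 1)) * ((t - t') - (t ^ (α - 1) - t' ^ (α - 1))) := by
    unfold rho; ring
  rw [this, abs_mul, abs_of_nonneg hc.1]
  calc _ ≤ 1 * (|t - t'| + (α - 1) * |t - t'|) :=
        mul_le_mul (hc.2.trans hη.2) ((abs_sub _ _).trans (by linarith)) (abs_nonneg _)
          zero_le_one
    _ = α * |t - t'| := by ring

end Problem

namespace Admissible

variable {α η μ₀ β : ℝ} {ν : SignedMeasure ℝ}

lemma one_lt (h : Admissible α η μ₀ β ν) : 1 < α := by linarith [h.two_le]

lemma one_sub_Lam_pos (h : Admissible α η μ₀ β ν) : 0 < 1 - Lam η μ₀ β ν := by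
  linarith [h.Lam_lt_one]

lemma Phi_eq (h : Admissible α η μ₀ β ν) (s : ℝ) : Phi α η μ₀ β ν s =
    β / (1 - Lam η μ₀ β ν) * gA α ν s + μ₀ / (1 - Lam η μ₀ β ν) * Psi α s + Psi α s := by
  have := h.one_sub_Lam_pos.ne'
  unfold Phi
  field_simp
  ring

lemma Hcoef_le_Phi (h : Admissible α η μ₀ β ν) {s : ℝ} (hs : s ∈ Icc (0:ℝ) 1) :
    Hcoef α η μ₀ β ν s ≤ Phi α η μ₀ β ν s := by
  rw [h.Phi_eq, Hcoef]
  gcongr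
  · exact div_nonneg h.μ₀_nonneg h.one_sub_Lam_pos.le
  · exact G_le_Psi h.one_lt h.η_mem hs.2

lemma Phi_nonneg (h : Admissible α η μ₀ β ν) {s : ℝ} (hs : s ∈ Icc (0:ℝ) 1) :
    0 ≤ Phi α η μ₀ β ν s := by
  have hΨ := Psi_nonneg (by linarith [h.two_le]) hs.2
  rw [h.Phi_eq]
  have := mul_nonneg (div_nonneg h.β_nonneg h.one_sub_Lam_pos.le) (h.gA_nonneg s hs)
  have := mul_nonneg (div_nonneg h.μ₀_nonneg h.one_sub_Lam_pos.le) hΨ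
  linarith

lemma Hker_le_Phi (h : Admissible α η μ₀ β ν) {t s : ℝ} (ht : t ∈ Icc (0:ℝ) 1)
    (hs : s ∈ Icc (0:ℝ) 1) : Hker α η μ₀ β ν t s ≤ Phi α η μ₀ β ν s := by
  have hc₁ := div_nonneg h.β_nonneg h.one_sub_Lam_pos.le
  have hc₂ := div_nonneg h.μ₀_nonneg h.one_sub_Lam_pos.le
  have hGη := G_le_Psi h.one_lt h.η_mem hs.2
  have hGη₀ := G_nonneg h.two_le h.η_mem hs
  rw [h.Phi_eq, Hker, mul_div_right_comm, mul_div_right_comm μ₀]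
  gcongr ?_ + ?_ + ?_
  · calc _ = β / (1 - Lam η μ₀ β ν) * gA α ν s * t := by ring
      _ ≤ _ := mul_le_of_le_one_right (mul_nonneg hc₁ (h.gA_nonneg s hs)) ht.2
  · calc _ = μ₀ / (1 - Lam η μ₀ β ν) * (t * G α η s) := by ring
      _ ≤ _ := by gcongr; exact (mul_le_of_le_one_left hGη₀ ht.2).trans hGη
  · exact G_le_Psi h.one_lt ht hs.2

lemma rho_mul_Phi_le_Hker (h : Admissible α η μ₀ β ν) {t s : ℝ} (ht : t ∈ Icc (0:ℝ) 1)
    (hs : s ∈ Icc (0:ℝ) 1) : rho α η t * Phi α η μ₀ β ν s ≤ Hker α η μ₀ β ν t s := by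
  have hα := h.two_le
  have hc₁ := div_nonneg h.β_nonneg h.one_sub_Lam_pos.le
  have hc₂ := div_nonneg h.μ₀_nonneg h.one_sub_Lam_pos.le
  have hΨ := Psi_nonneg (by linarith : 0 < α) hs.2
  have hρ := rho_le hα h.η_mem ht
  have hsub := sub_rpow_mem_Icc (p := α - 1) (by linarith) ht
  have hGη := sub_rpow_mul_Psi_le_G h.one_lt h.η_mem hs
  have hGt := sub_rpow_mul_Psi_le_G h.one_lt ht hs
  have hρη : rho α η t ≤ (η - η ^ (α - 1)) * t :=
    mul_le_mul_of_nonneg_left hsub.2 (sub_rpow_mem_Icc (p := α - 1) (by linarith) h.η_mem).1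
  have hgA := h.gA_nonneg s hs
  have e₁ : rho α η t * (β / (1 - Lam η μ₀ β ν) * gA α ν s)
      ≤ β / (1 - Lam η μ₀ β ν) * t * gA α ν s := by
    have := mul_le_mul_of_nonneg_left (hρ.trans hsub.2) (mul_nonneg hc₁ hgA)
    linarith
  have e₂ : rho α η t * (μ₀ / (1 - Lam η μ₀ β ν) * Psi α s)
      ≤ μ₀ / (1 - Lam η μ₀ β ν) * t * G α η s := by
    have a₁ := mul_le_mul_of_nonneg_right hρη hΨ
    have a₂ := mul_le_mul_of_nonneg_left hGη ht.1
    have : rho α η t * Psi α s ≤ t * G α η s := a₁.trans (by linarith)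
    have := mul_le_mul_of_nonneg_left this hc₂
    linarith
  have e₃ : rho α η t * Psi α s ≤ G α t s := (mul_le_mul_of_nonneg_right hρ hΨ).trans hGt
  rw [h.Phi_eq, Hker, mul_div_right_comm, mul_div_right_comm μ₀]
  linarith

lemma Hker_nonneg (h : Admissible α η μ₀ β ν) {t s : ℝ} (ht : t ∈ Icc (0:ℝ) 1)
    (hs : s ∈ Icc (0:ℝ) 1) : 0 ≤ Hker α η μ₀ β ν t s :=
  (mul_nonneg (rho_nonneg h.two_le h.η_mem ht) (h.Phi_nonneg hs)).trans
    (h.rho_mul_Phi_le_Hker ht hs)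

lemma Hcoef_nonneg (h : Admissible α η μ₀ β ν) {s : ℝ} (hs : s ∈ Icc (0:ℝ) 1) :
    0 ≤ Hcoef α η μ₀ β ν s := by
  have := mul_nonneg (div_nonneg h.β_nonneg h.one_sub_Lam_pos.le) (h.gA_nonneg s hs)
  have := mul_nonneg (div_nonneg h.μ₀_nonneg h.one_sub_Lam_pos.le) (G_nonneg h.two_le h.η_mem hs)
  have := Psi_nonneg (by linarith [h.two_le] : 0 < α) hs.2
  rw [Hcoef]
  linarith

lemma abs_Hker_sub_le (h : Admissible α η μ₀ β ν) {t t' s : ℝ} (ht : t ∈ Icc (0:ℝ) 1)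
    (ht' : t' ∈ Icc (0:ℝ) 1) (hs : s ∈ Icc (0:ℝ) 1) :
    |Hker α η μ₀ β ν t s - Hker α η μ₀ β ν t' s|
      ≤ (Phi α η μ₀ β ν s + (α - 1) / Real.Gamma α) * |t - t'| := by
  have hK := abs_riemannLiouvilleKernel_sub_le h.two_le ht ht' hs.1
  have hq : |(t - t') * Hcoef α η μ₀ β ν s| ≤ Phi α η μ₀ β ν s * |t - t'| := by
    rw [abs_mul, abs_of_nonneg (h.Hcoef_nonneg hs), mul_comm]
    exact mul_le_mul_of_nonneg_right (h.Hcoef_le_Phi hs) (abs_nonneg _)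
  rw [Hker_eq_mul_Hcoef_sub h.one_lt, Hker_eq_mul_Hcoef_sub h.one_lt]
  calc _ = |(t - t') * Hcoef α η μ₀ β ν s
        - (riemannLiouvilleKernel α t s - riemannLiouvilleKernel α t' s)| := by ring_nf
    _ ≤ _ := (abs_sub _ _).trans (by linarith)

lemma tau1_nonneg (h : Admissible α η μ₀ β ν) : 0 ≤ tau1 α η μ₀ β ν :=
  setIntegral_nonneg measurableSet_Icc fun _ hs =>
    mul_nonneg (rho_nonneg h.two_le h.η_mem hs) (h.Phi_nonneg hs)

lemma integrableOn_Hker_mul (h : Admissible α η μ₀ β ν) (t : ℝ) {ψ : ℝ → ℝ}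
    (hψ : Continuous ψ) : IntegrableOn (fun s => Hker α η μ₀ β ν t s * ψ s) (Icc 0 1) :=
  (((continuous_Hker h.one_lt).comp (Continuous.prodMk_right t)).mul hψ).integrableOn_Icc

lemma integral_Hker_mul_le (h : Admissible α η μ₀ β ν) {t : ℝ} (ht : t ∈ Icc (0:ℝ) 1)
    {ψ : ℝ → ℝ} (hψ : Continuous ψ) {M : ℝ} (hψM : ∀ s ∈ Icc (0:ℝ) 1, ψ s ∈ Icc 0 M) :
    ∫ s in Icc 0 1, Hker α η μ₀ β ν t s * ψ s ≤ M * tau2 α η μ₀ β ν := by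
  rw [tau2, ← integral_const_mul]
  refine setIntegral_mono_on (h.integrableOn_Hker_mul t hψ)
    ((continuous_Phi h.one_lt).const_mul M |>.integrableOn_Icc) measurableSet_Icc
    fun s hs => ?_
  rw [mul_comm M]
  exact mul_le_mul (h.Hker_le_Phi ht hs) (hψM s hs).2 (hψM s hs).1 (h.Phi_nonneg hs)

lemma abs_integral_Hker_mul_sub_le (h : Admissible α η μ₀ β ν) {t t' : ℝ}
    (ht : t ∈ Icc (0:ℝ) 1) (ht' : t' ∈ Icc (0:ℝ) 1) {ψ : ℝ → ℝ} (hψ : Continuous ψ) {M : ℝ}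
    (hψM : ∀ s ∈ Icc (0:ℝ) 1, |ψ s| ≤ M) :
    |(∫ s in Icc 0 1, Hker α η μ₀ β ν t s * ψ s) - ∫ s in Icc 0 1, Hker α η μ₀ β ν t' s * ψ s|
      ≤ M * (tau2 α η μ₀ β ν + (α - 1) / Real.Gamma α) * |t - t'| := by
  have hΦ := continuous_Phi (η := η) (μ₀ := μ₀) (β := β) (ν := ν) h.one_lt
  rw [← integral_sub (h.integrableOn_Hker_mul t hψ) (h.integrableOn_Hker_mul t' hψ),
    ← Real.norm_eq_abs]
  refine (norm_integral_le_of_norm_le (g := fun s => M * |t - t'| *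
      (Phi α η μ₀ β ν s + (α - 1) / Real.Gamma α))
    ((hΦ.add continuous_const).const_mul _).integrableOn_Icc
    (ae_restrict_of_forall_mem measurableSet_Icc fun s hs => ?_)).trans (le_of_eq ?_)
  · rw [← sub_mul, norm_mul, Real.norm_eq_abs]
    calc _ ≤ (Phi α η μ₀ β ν s + (α - 1) / Real.Gamma α) * |t - t'| * M :=
          mul_le_mul (h.abs_Hker_sub_le ht ht' hs) (hψM s hs) (abs_nonneg _)
            (mul_nonneg (add_nonneg (h.Phi_nonneg hs) (div_nonneg (by linarith [h.two_le])
              (Real.Gamma_pos_of_pos (by linarith [h.two_le])).le)) (abs_nonneg _))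
      _ = _ := by ring
  · rw [integral_const_mul, integral_add hΦ.integrableOn_Icc (integrable_const _),
      setIntegral_const, Real.volume_real_Icc, tau2]
    norm_num
    ring

theorem le_of_le_integral (h : Admissible α η μ₀ β ν) {a c : ℝ} (ha : 0 ≤ a)
    (hat : a * tau2 α η μ₀ β ν < 1) {φ : ℝ → ℝ → ℝ} (hφ : Continuous (Function.uncurry φ))
    (hφ₀ : ∀ s ∈ Icc (0:ℝ) 1, ∀ x, 0 ≤ x → 0 ≤ φ s x)
    (hφa : ∀ s ∈ Icc (0:ℝ) 1, ∀ x, 0 ≤ x → φ s x ≤ a * x + c) {u : ℝ → ℝ} (hu : Continuous u)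
    (hu₀ : ∀ t ∈ Icc (0:ℝ) 1, 0 ≤ u t)
    (hfix : ∀ t ∈ Icc (0:ℝ) 1, u t ≤ 1 + ∫ s in Icc 0 1, Hker α η μ₀ β ν t s * φ s (u s)) :
    ∀ t ∈ Icc (0:ℝ) 1, u t ≤ (c * tau2 α η μ₀ β ν + 1) / (1 - a * tau2 α η μ₀ β ν) := by
  obtain ⟨t₀, ht₀, hmax⟩ :=
    isCompact_Icc.exists_isMaxOn (nonempty_Icc.2 zero_le_one) hu.continuousOn
  have hφu : Continuous fun s => φ s (u s) := hφ.comp (continuous_id.prodMk hu)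
  have hbound : u t₀ ≤ 1 + (a * u t₀ + c) * tau2 α η μ₀ β ν := by
    refine (hfix t₀ ht₀).trans (add_le_add_right (h.integral_Hker_mul_le ht₀ hφu
      fun s hs => ⟨hφ₀ s hs _ (hu₀ s hs), ?_⟩) 1)
    exact (hφa s hs _ (hu₀ s hs)).trans (by gcongr; exact hmax hs)
  intro t ht
  refine (hmax ht).trans ?_
  rw [le_div_iff₀ (by linarith)]
  linarith

lemma tau1_pos (h : Admissible α η μ₀ β ν) {b : ℝ} (hb : 1 ≤ b * tau1 α η μ₀ β ν) :
    0 < tau1 α η μ₀ β ν :=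
  h.tau1_nonneg.lt_of_ne (by rintro h₀; rw [← h₀, mul_zero] at hb; linarith)

lemma pos_of_one_le_mul_tau1 (h : Admissible α η μ₀ β ν) {b : ℝ}
    (hb : 1 ≤ b * tau1 α η μ₀ β ν) : 0 < b :=
  pos_of_mul_pos_left (one_pos.trans_le hb) (h.tau1_pos hb).le

theorem exists_lt_of_le_integral (h : Admissible α η μ₀ β ν) {b δ ε : ℝ}
    (hb : 1 ≤ b * tau1 α η μ₀ β ν) (hε : 0 < ε) {φ : ℝ → ℝ → ℝ}
    (hφ : Continuous (Function.uncurry φ))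
    (hφb : ∀ s ∈ Icc (0:ℝ) 1, ∀ x ∈ Icc 0 δ, b * x ≤ φ s x) {u : ℝ → ℝ} (hu : Continuous u)
    (hu₀ : ∀ t ∈ Icc (0:ℝ) 1, 0 ≤ u t)
    (hfix : ∀ t ∈ Icc (0:ℝ) 1,
      ε * rho α η t + ∫ s in Icc 0 1, Hker α η μ₀ β ν t s * φ s (u s) ≤ u t) :
    ∃ t ∈ Icc (0:ℝ) 1, δ < u t := by
  by_contra! hsmall
  have hτ₁ := h.tau1_pos hb
  have hb₀ := h.pos_of_one_le_mul_tau1 hb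
  have hΦ := continuous_Phi (η := η) (μ₀ := μ₀) (β := β) (ν := ν) h.one_lt
  have hρ := continuous_rho (η := η) h.one_lt
  have hφu : Continuous fun s => φ s (u s) := hφ.comp (continuous_id.prodMk hu)
  have hΦu : Continuous fun s => Phi α η μ₀ β ν s * u s := hΦ.mul hu
  set M := ∫ s in Icc (0:ℝ) 1, Phi α η μ₀ β ν s * u s
  have hM : 0 ≤ M := setIntegral_nonneg measurableSet_Icc fun s hs =>
    mul_nonneg (h.Phi_nonneg hs) (hu₀ s hs)
  have hlow : ∀ t ∈ Icc (0:ℝ) 1, rho α η t * (ε + b * M) ≤ u t := by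
    intro t ht
    refine le_trans (le_of_eq ?_) ((add_le_add_right (setIntegral_mono_on
      ((hΦu.const_mul (rho α η t * b)).integrableOn_Icc)
      (h.integrableOn_Hker_mul t hφu) measurableSet_Icc fun s hs => ?_) _).trans (hfix t ht))
    · rw [integral_const_mul]; ring
    · calc rho α η t * b * (Phi α η μ₀ β ν s * u s)
          = rho α η t * Phi α η μ₀ β ν s * (b * u s) := by ring
        _ ≤ _ := mul_le_mul (h.rho_mul_Phi_le_Hker ht hs)
            (hφb s hs _ ⟨hu₀ s hs, hsmall s hs⟩) (mul_nonneg hb₀.le (hu₀ s hs))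
            (h.Hker_nonneg ht hs)
  have hτ : (ε + b * M) * tau1 α η μ₀ β ν ≤ M := by
    rw [tau1, ← integral_const_mul]
    refine setIntegral_mono_on (((hρ.mul hΦ).const_mul _).integrableOn_Icc)
      hΦu.integrableOn_Icc measurableSet_Icc fun s hs => ?_
    calc _ = Phi α η μ₀ β ν s * (rho α η s * (ε + b * M)) := by ring
      _ ≤ _ := mul_le_mul_of_nonneg_left (hlow s hs) (h.Phi_nonneg hs)
  nlinarith [mul_pos hε hτ₁]

theorem exists_eq_mul_rho_add_integral (h : Admissible α η μ₀ β ν) {g : ℝ → ℝ → ℝ}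
    (hg : Continuous (Function.uncurry g)) {m : ℝ≥0} (hgL : ∀ s, LipschitzWith m (g s)) {M : ℝ}
    (hgM : ∀ s x, |g s x| ≤ M) (ε : ℝ) :
    ∃ u : ℝ → ℝ, Continuous u ∧ ∀ t ∈ Icc (0:ℝ) 1,
      u t = ε * rho α η t + ∫ s in Icc 0 1, Hker α η μ₀ β ν t s * g s (u s) := by
  have hα := h.one_lt
  have hΓ := Real.Gamma_pos_of_pos (by linarith : 0 < α)
  obtain ⟨u, hu, hfix⟩ := exists_solution_rankOne_sub_volterra
    (κ := ⟨1 / Real.Gamma α, (one_div_pos.2 hΓ).le⟩)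
    (continuous_riemannLiouvilleKernel hα) (fun t s => riemannLiouvilleKernel_of_le hα)
    (fun t ht s hs => (abs_of_nonneg (riemannLiouvilleKernel_nonneg (by linarith) t s)).trans_le
      (riemannLiouvilleKernel_le hα ht.2 hs.1))
    hg hgL hgM (continuous_Hcoef (η := η) (μ₀ := μ₀) (β := β) (ν := ν) hα)
    (w := fun t => ε * rho α η t) (continuous_const.mul (continuous_rho (η := η) hα))
  exact ⟨u, hu, by simpa only [← Hker_eq_mul_Hcoef_sub hα] using hfix⟩

theorem lipschitzOnWith_of_eq_mul_rho_add_integral (h : Admissible α η μ₀ β ν) {ε : ℝ}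
    (hε : ε ∈ Icc (0:ℝ) 1) {ψ : ℝ → ℝ} (hψ : Continuous ψ) {M : ℝ}
    (hψM : ∀ s ∈ Icc (0:ℝ) 1, |ψ s| ≤ M) {u : ℝ → ℝ}
    (hu : ∀ t ∈ Icc (0:ℝ) 1, u t = ε * rho α η t + ∫ s in Icc 0 1, Hker α η μ₀ β ν t s * ψ s) :
    LipschitzOnWith (Real.toNNReal (α + M * (tau2 α η μ₀ β ν + (α - 1) / Real.Gamma α)))
      u (Icc 0 1) := by
  refine LipschitzOnWith.of_dist_le' fun t ht t' ht' => ?_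
  rw [Real.dist_eq, Real.dist_eq, hu t ht, hu t' ht']
  have hρ := abs_rho_sub_le h.two_le h.η_mem ht ht'
  have hI := h.abs_integral_Hker_mul_sub_le ht ht' hψ hψM
  calc _ = |ε * (rho α η t - rho α η t') + ((∫ s in Icc 0 1, Hker α η μ₀ β ν t s * ψ s)
          - ∫ s in Icc 0 1, Hker α η μ₀ β ν t' s * ψ s)| := by ring_nf
    _ ≤ ε * |rho α η t - rho α η t'|
          + M * (tau2 α η μ₀ β ν + (α - 1) / Real.Gamma α) * |t - t'| := by
        rw [← abs_of_nonneg hε.1, ← abs_mul, abs_of_nonneg hε.1]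
        exact (abs_add_le _ _).trans (add_le_add_right hI _)
    _ ≤ α * |t - t'| + M * (tau2 α η μ₀ β ν + (α - 1) / Real.Gamma α) * |t - t'| := by
        gcongr ?_ + _
        exact (mul_le_of_le_one_left (abs_nonneg _) hε.2).trans hρ
    _ = _ := by ring

variable {f : ℝ → ℝ → ℝ} {X : ℝ}

theorem exists_approx_solution (h : Admissible α η μ₀ β ν)
    (hf : ContinuousOn (fun p : ℝ × ℝ => f p.1 p.2) (Icc (0:ℝ) 1 ×ˢ Ici (0:ℝ)))
    (hf₀ : ∀ t ∈ Icc (0:ℝ) 1, ∀ x : ℝ, 0 ≤ x → 0 ≤ f t x)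
    {a c : ℝ} (ha : 0 ≤ a) (hat : a * tau2 α η μ₀ β ν < 1)
    (hC1 : ∀ t ∈ Icc (0:ℝ) 1, ∀ x : ℝ, 0 ≤ x → f t x ≤ a * x + c)
    {b δ : ℝ} (hb : 1 ≤ b * tau1 α η μ₀ β ν)
    (hC2 : ∀ t ∈ Icc (0:ℝ) 1, ∀ x : ℝ, 0 ≤ x → x ≤ δ → b * x ≤ f t x)
    (hX : 0 ≤ X) (hRX : (c * tau2 α η μ₀ β ν + 1) / (1 - a * tau2 α η μ₀ β ν) ≤ X)
    (hδX : δ ≤ X) {m : ℝ≥0} (hm : 1 ≤ m) (hbm : b ≤ m) :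
    ∃ u : ℝ → ℝ, Continuous u ∧
      (∀ t ∈ Icc (0:ℝ) 1, u t = (m : ℝ)⁻¹ * rho α η t
        + ∫ s in Icc 0 1, Hker α η μ₀ β ν t s * lipApprox f hX m s (u s)) ∧
      (∀ t ∈ Icc (0:ℝ) 1, u t ∈ Icc 0 X) ∧ (∃ t ∈ Icc (0:ℝ) 1, δ / 2 < u t) ∧
      LipschitzOnWith (Real.toNNReal (α + (a * X + c) *
        (tau2 α η μ₀ β ν + (α - 1) / Real.Gamma α))) u (Icc 0 1) := by
  have hφ := continuous_lipApprox hX hf (m := m)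
  have hφ₀ : ∀ s x, 0 ≤ lipApprox f hX m s x := fun s x => lipApprox_nonneg hX hf₀
  have hφM : ∀ s x, |lipApprox f hX m s x| ≤ a * X + c := fun s x =>
    abs_lipApprox_le hX hf₀ ha hC1
  have hε : (m : ℝ)⁻¹ ∈ Icc (0:ℝ) 1 :=
    ⟨by positivity, inv_le_one_of_one_le₀ (by exact_mod_cast hm)⟩
  obtain ⟨u, hu, hfix⟩ :=
    h.exists_eq_mul_rho_add_integral hφ (lipschitzWith_lipApprox hX hf₀) hφM (m : ℝ)⁻¹
  have hρ : ∀ t ∈ Icc (0:ℝ) 1, (m : ℝ)⁻¹ * rho α η t ∈ Icc 0 1 := fun t ht =>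
    ⟨mul_nonneg hε.1 (rho_nonneg h.two_le h.η_mem ht),
      mul_le_one₀ hε.2 (rho_nonneg h.two_le h.η_mem ht) (rho_le_one h.two_le h.η_mem ht)⟩
  have hu₀ : ∀ t ∈ Icc (0:ℝ) 1, 0 ≤ u t := fun t ht => by
    rw [hfix t ht]
    exact add_nonneg (hρ t ht).1 (setIntegral_nonneg measurableSet_Icc fun s hs =>
      mul_nonneg (h.Hker_nonneg ht hs) (hφ₀ _ _))
  refine ⟨u, hu, hfix, fun t ht => ⟨hu₀ t ht, ?_⟩, ?_, h.lipschitzOnWith_of_eq_mul_rho_add_integral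
    hε (hφ.comp (continuous_id.prodMk hu)) (fun s _ => hφM s (u s)) hfix⟩
  · refine (h.le_of_le_integral ha hat hφ (fun s _ x _ => hφ₀ s x) (fun s _ x hx => ?_) hu hu₀
      (fun t ht => (hfix t ht).trans_le (by linarith [(hρ t ht).2])) t ht).trans hRX
    refine ((lipApprox_le_truncation hX hf₀).trans (truncation_le hX hC1 s x)).trans ?_
    gcongr
    exact max_le hx (min_le_right _ _)
  · exact h.exists_lt_of_le_integral hb (inv_pos.2 (zero_lt_one.trans_le hm)) hφ
      (fun s hs x hx =>
        mul_le_lipApprox hX hf₀ hC2 hδX (h.pos_of_one_le_mul_tau1 hb).le hbm hs hx)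
      hu hu₀ fun t ht => (hfix t ht).ge

theorem solution_of_tendstoUniformlyOn (h : Admissible α η μ₀ β ν)
    (hf : ContinuousOn (fun p : ℝ × ℝ => f p.1 p.2) (Icc (0:ℝ) 1 ×ˢ Ici (0:ℝ)))
    (hf₀ : ∀ t ∈ Icc (0:ℝ) 1, ∀ x : ℝ, 0 ≤ x → 0 ≤ f t x) {a c : ℝ} (ha : 0 ≤ a)
    (hC1 : ∀ t ∈ Icc (0:ℝ) 1, ∀ x : ℝ, 0 ≤ x → f t x ≤ a * x + c) (hX : 0 ≤ X)
    {m : ℕ → ℝ≥0} (hm : Tendsto m atTop atTop) {u : ℕ → ℝ → ℝ} (hu : ∀ k, Continuous (u k))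
    (hfix : ∀ k, ∀ t ∈ Icc (0:ℝ) 1, u k t = (m k : ℝ)⁻¹ * rho α η t
        + ∫ s in Icc 0 1, Hker α η μ₀ β ν t s * lipApprox f hX (m k) s (u k s))
    (hmem : ∀ k, ∀ t ∈ Icc (0:ℝ) 1, u k t ∈ Icc 0 X) {v : ℝ → ℝ}
    (hv : TendstoUniformlyOn u v atTop (Icc 0 1)) :
    ContinuousOn v (Icc 0 1) ∧ (∀ t ∈ Icc (0:ℝ) 1, v t ∈ Icc 0 X) ∧
      ∀ t ∈ Icc (0:ℝ) 1, v t = ∫ s in Icc 0 1, Hker α η μ₀ β ν t s * f s (v s) := by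
  have hvt : ∀ t ∈ Icc (0:ℝ) 1, Tendsto (u · t) atTop (𝓝 (v t)) := fun t ht => hv.tendsto_at ht
  have hvX : ∀ t ∈ Icc (0:ℝ) 1, v t ∈ Icc 0 X := fun t ht =>
    isClosed_Icc.mem_of_tendsto (hvt t ht) (Eventually.of_forall fun k => hmem k t ht)
  refine ⟨hv.continuousOn (Frequently.of_forall fun k => (hu k).continuousOn), hvX,
    fun t ht => tendsto_nhds_unique (hvt t ht) ?_⟩
  have hH := (continuous_Hker (η := η) (μ₀ := μ₀) (β := β) (ν := ν) h.one_lt).comp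
    (Continuous.prodMk_right t)
  have hlim : Tendsto (fun k => ∫ s in Icc 0 1, Hker α η μ₀ β ν t s *
      lipApprox f hX (m k) s (u k s)) atTop
      (𝓝 (∫ s in Icc 0 1, Hker α η μ₀ β ν t s * f s (v s))) := by
    refine tendsto_integral_of_dominated_convergence
      (fun s => |Hker α η μ₀ β ν t s| * (a * X + c))
      (fun k => (hH.mul ((continuous_lipApprox hX hf).comp
        (continuous_id.prodMk (hu k)))).aestronglyMeasurable)
      (hH.abs.mul continuous_const).integrableOn_Icc (fun k => ae_of_all _ fun s => ?_)
      (ae_restrict_of_forall_mem measurableSet_Icc fun s hs => ?_)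
    · rw [norm_mul, Real.norm_eq_abs, Real.norm_eq_abs]
      exact mul_le_mul_of_nonneg_left (abs_lipApprox_le hX hf₀ ha hC1) (abs_nonneg _)
    · rw [← truncation_of_mem (f := f) hX hs (hvX s hs)]
      exact (tendsto_lipApprox hX hf₀ hf hm (hvt s hs) s).const_mul _
  have hρ : Tendsto (fun k => (m k : ℝ)⁻¹ * rho α η t) atTop (𝓝 0) := by
    simpa using (tendsto_inv_atTop_zero.comp (NNReal.tendsto_coe_atTop.2 hm)).mul_const
      (rho α η t)
  simpa only [← hfix _ t ht, zero_add] using hρ.add hlim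

end Admissible

theorem exists_positive_solution_general (α η μ₀ β : ℝ) (ν : MeasureTheory.SignedMeasure ℝ)
    (hα₁ : 2 < α) (hη : η ∈ Ioo (0:ℝ) 1) (hμ : 0 ≤ μ₀) (hβ : 0 ≤ β)
    (hΛ₁ : Lam η μ₀ β ν < 1)
    (hgA : ∀ s ∈ Icc (0:ℝ) 1, 0 ≤ gA α ν s)
    (f : ℝ → ℝ → ℝ)
    (hf : ContinuousOn (fun p : ℝ × ℝ => f p.1 p.2) (Icc (0:ℝ) 1 ×ˢ Ici (0:ℝ)))
    (hfpos : ∀ t ∈ Icc (0:ℝ) 1, ∀ x : ℝ, 0 ≤ x → 0 ≤ f t x)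
    -- (C1)
    (a c : ℝ) (ha : 0 < a) (hat : a * tau2 α η μ₀ β ν < 1)
    (hC1 : ∀ t ∈ Icc (0:ℝ) 1, ∀ x : ℝ, 0 ≤ x → f t x ≤ a * x + c)
    -- (C2)
    (b δ : ℝ) (hb : 1 ≤ b * tau1 α η μ₀ β ν) (hδ : 0 < δ)
    (hC2 : ∀ t ∈ Icc (0:ℝ) 1, ∀ x : ℝ, 0 ≤ x → x ≤ δ → b * x ≤ f t x) :
    ∃ u : ℝ → ℝ, ContinuousOn u (Icc (0:ℝ) 1) ∧
      (∀ t ∈ Icc (0:ℝ) 1, 0 ≤ u t) ∧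
      (∃ t ∈ Icc (0:ℝ) 1, u t ≠ 0) ∧
      ∀ t ∈ Icc (0:ℝ) 1,
        u t = ∫ s in Icc (0:ℝ) 1, Hker α η μ₀ β ν t s * f s (u s) := by
  have h : Admissible α η μ₀ β ν := ⟨hα₁.le, Ioo_subset_Icc_self hη, hμ, hβ, hΛ₁, hgA⟩
  let X := max ((c * tau2 α η μ₀ β ν + 1) / (1 - a * tau2 α η μ₀ β ν)) δ
  have hX : 0 ≤ X := hδ.le.trans (le_max_right _ _)
  let m : ℕ → ℝ≥0 := fun k => k + (1 + b.toNNReal)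
  have hm : Tendsto m atTop atTop :=
    tendsto_atTop_mono (fun k => le_self_add) tendsto_natCast_atTop_atTop
  choose u hu hfix hmem hpos hlip using fun k =>
    h.exists_approx_solution hf hfpos ha.le hat hC1 hb hC2 hX (le_max_left _ _) (le_max_right _ _)
      (le_add_left le_self_add : 1 ≤ m k)
      ((Real.le_coe_toNNReal b).trans (by exact_mod_cast le_add_left le_add_self : _ ≤ (m k : ℝ)))
  obtain ⟨v, φ, hφ, hv⟩ := exists_subseq_tendstoUniformlyOn isCompact_Icc hlip (M := X)
    fun k t ht => abs_le.2 ⟨by linarith [(hmem k t ht).1], (hmem k t ht).2⟩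
  obtain ⟨hvc, hvX, hveq⟩ := h.solution_of_tendstoUniformlyOn hf hfpos ha.le hC1 hX
    (hm.comp hφ.tendsto_atTop) (fun k => hu (φ k)) (fun k => hfix (φ k)) (fun k => hmem (φ k)) hv
  exact ⟨v, hvc, fun t ht => (hvX t ht).1,
    exists_ne_zero_of_tendstoUniformlyOn hv (half_pos hδ) fun k => hpos (φ k), hveq⟩

/-- Theorem 3.1: under (H1), (H2), (C1) and (C2) the nonlocal fractional boundary value
problem has at least one positive solution, i.e. a nonnegative, not identically zero,
continuous fixed point of `u ↦ ∫₀¹ H(·,s)f(s,u(s)) ds`. -/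
theorem exists_positive_solution (α η μ₀ β : ℝ) (ν : MeasureTheory.SignedMeasure ℝ)
    (hα₁ : 2 < α) (hα₂ : α ≤ 3) (hη : η ∈ Ioo (0:ℝ) 1) (hμ : 0 ≤ μ₀) (hβ : 0 ≤ β)
    (hΛ₀ : 0 ≤ Lam η μ₀ β ν) (hΛ₁ : Lam η μ₀ β ν < 1)
    (hgA : ∀ s ∈ Icc (0:ℝ) 1, 0 ≤ gA α ν s)
    (f : ℝ → ℝ → ℝ)
    (hf : ContinuousOn (fun p : ℝ × ℝ => f p.1 p.2) (Icc (0:ℝ) 1 ×ˢ Ici (0:ℝ)))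
    (hfpos : ∀ t ∈ Icc (0:ℝ) 1, ∀ x : ℝ, 0 ≤ x → 0 ≤ f t x)
    -- (C1)
    (a c : ℝ) (ha : 0 < a) (hat : a * tau2 α η μ₀ β ν < 1) (hc : 0 < c)
    (hC1 : ∀ t ∈ Icc (0:ℝ) 1, ∀ x : ℝ, 0 ≤ x → f t x ≤ a * x + c)
    -- (C2)
    (b δ : ℝ) (hb : 1 ≤ b * tau1 α η μ₀ β ν) (hδ : 0 < δ)
    (hC2 : ∀ t ∈ Icc (0:ℝ) 1, ∀ x : ℝ, 0 ≤ x → x ≤ δ → b * x ≤ f t x) :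
    ∃ u : ℝ → ℝ, ContinuousOn u (Icc (0:ℝ) 1) ∧
      (∀ t ∈ Icc (0:ℝ) 1, 0 ≤ u t) ∧
      (∃ t ∈ Icc (0:ℝ) 1, u t ≠ 0) ∧
      ∀ t ∈ Icc (0:ℝ) 1,
        u t = ∫ s in Icc (0:ℝ) 1, Hker α η μ₀ β ν t s * f s (u s) :=
  exists_positive_solution_general α η μ₀ β ν hα₁ hη hμ hβ hΛ₁ hgA f hf hfpos a c ha hat hC1 b δ hb
    hδ hC2
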